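/- Let G be an edge-colored graph and S a vertex cover of G. Then f_B(G) holds if and only if there exists an edge {u,v} ∈ E_G ∪ E_B with either {u,v} ∈ E^R(S) or both u,v ∈ S, such that ¬f_W(G−u−v); and symmetrically f_W(G) holds if and only if there exists an edge {u,v} ∈ E_G ∪ E_W with either {u,v} ∈ E^R(S) or both u,v ∈ S, such that ¬f_B(G−u−v). In other words, both players may without loss of generality restrict their moves to edges inside S or incident to class representatives. -/
import Mathlib


/-- The three edge colors: gray, black, white. -/
inductive EColor : Type
  | gray | black | white
deriving DecidableEq

/-- An edge-colored graph on the vertex type `V`: `col u v` is the color of the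
edge `{u,v}` if it is present, and `none` otherwise. -/
structure ECGraph (V : Type) where
  col : V → V → Option EColor
  symm : ∀ u v, col u v = col v u
  loopless : ∀ v, col v v = none

mutual
  /-- `fB G A` : the first player B wins Colored Arc Kayles on the position of `G`
  induced by the vertex set `A`, B to move. B must pick a gray or black edge. -/
  def fB {V : Type} [DecidableEq V] (G : ECGraph V) (A : Finset V) : Prop :=
    ∃ u : {x // x ∈ A}, ∃ v : {x // x ∈ A},
      (G.col u.1 v.1 = some EColor.gray ∨ G.col u.1 v.1 = some EColor.black) ∧
      ¬ fW G (A \ {u.1, v.1})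
  termination_by A.card
  decreasing_by
    have h1 : A \ {u.1, v.1} ⊆ A.erase u.1 := by
      intro x hx
      simp only [Finset.mem_sdiff, Finset.mem_insert, Finset.mem_singleton,
        Finset.mem_erase] at hx ⊢
      tauto
    exact lt_of_le_of_lt (Finset.card_le_card h1) (Finset.card_erase_lt_of_mem u.2)

  /-- `fW G A` : the second player W wins the position `A` of `G`, W to move.
  W must pick a gray or white edge. -/
  def fW {V : Type} [DecidableEq V] (G : ECGraph V) (A : Finset V) : Prop :=
    ∃ u : {x // x ∈ A}, ∃ v : {x // x ∈ A},
      (G.col u.1 v.1 = some EColor.gray ∨ G.col u.1 v.1 = some EColor.white) ∧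
      ¬ fB G (A \ {u.1, v.1})
  termination_by A.card
  decreasing_by
    have h1 : A \ {u.1, v.1} ⊆ A.erase u.1 := by
      intro x hx
      simp only [Finset.mem_sdiff, Finset.mem_insert, Finset.mem_singleton,
        Finset.mem_erase] at hx ⊢
      tauto
    exact lt_of_le_of_lt (Finset.card_le_card h1) (Finset.card_erase_lt_of_mem u.2)
end

/-- `S` is a vertex cover: every edge has at least one endpoint in `S`. -/
def IsVertexCover {V : Type} (G : ECGraph V) (S : Set V) : Prop :=
  ∀ u v : V, G.col u v ≠ none → u ∈ S ∨ v ∈ S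

/-- The profile of a vertex `v` with respect to `S`: it records, for every `u ∈ S`,
the color of the edge `{u,v}` (`none` meaning that the edge is absent). -/
def profile {V : Type} (G : ECGraph V) (S : Set V) (v : V) : S → Option EColor :=
  fun u => G.col v u.1

/-- `{u, w}` is an edge of the representative edge set `E^R(S)`: it is an edge of `G`
joining a vertex `u ∈ S` to the chosen representative `ρ(V_S^{(x)})` of the
equivalence class of profile `x = profile w`, with `w ∉ S`. -/
def InER {V : Type} (G : ECGraph V) (S : Set V)
    (ρ : (S → Option EColor) → V) (u w : V) : Prop :=
  G.col u w ≠ none ∧ u ∈ S ∧ w ∉ S ∧ w = ρ (profile G S w)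

lemma fBW_image {V : Type} [DecidableEq V] (G : ECGraph V) (σ : Equiv.Perm V)
    (hσ : ∀ x y, G.col (σ x) (σ y) = G.col x y) (A : Finset V) :
    (fB G A ↔ fB G (A.image σ)) ∧ (fW G A ↔ fW G (A.image σ)) := by
  induction A using Finset.strongInduction with
  | _ A ih =>
    have hsub : ∀ u v : V, u ∈ A → A \ {u, v} ⊂ A := by
      intro u v hu
      constructor
      · exact Finset.sdiff_subset
      · intro h
        have := h hu
        simp at this
    have key : ∀ u v : V, (A.image σ) \ {σ u, σ v} = (A \ {u, v}).image σ := by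
      intro u v
      rw [Finset.image_sdiff _ _ σ.injective, Finset.image_insert, Finset.image_singleton]
    constructor
    · unfold fB
      constructor
      · rintro ⟨u, v, hc, hw⟩
        refine ⟨⟨σ u.1, Finset.mem_image_of_mem σ u.2⟩, ⟨σ v.1, Finset.mem_image_of_mem σ v.2⟩,
          by rw [hσ]; exact hc, ?_⟩
        dsimp only
        rw [key u.1 v.1]
        exact fun h => hw (((ih _ (hsub u.1 v.1 u.2)).2).mpr h)
      · rintro ⟨u', v', hc, hw⟩
        obtain ⟨u, hu, hu'⟩ := Finset.mem_image.mp u'.2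
        obtain ⟨v, hv, hv'⟩ := Finset.mem_image.mp v'.2
        refine ⟨⟨u, hu⟩, ⟨v, hv⟩, ?_, ?_⟩
        · rw [← hσ u v, hu', hv']; exact hc
        · dsimp only
          intro h
          apply hw
          have heq : (A.image σ) \ {u'.1, v'.1} = (A \ {u, v}).image σ := by
            rw [← hu', ← hv']; exact key u v
          rw [heq]
          exact ((ih _ (hsub u v hu)).2).mp h
    · unfold fW
      constructor
      · rintro ⟨u, v, hc, hw⟩
        refine ⟨⟨σ u.1, Finset.mem_image_of_mem σ u.2⟩, ⟨σ v.1, Finset.mem_image_of_mem σ v.2⟩,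
          by rw [hσ]; exact hc, ?_⟩
        dsimp only
        rw [key u.1 v.1]
        exact fun h => hw (((ih _ (hsub u.1 v.1 u.2)).1).mpr h)
      · rintro ⟨u', v', hc, hw⟩
        obtain ⟨u, hu, hu'⟩ := Finset.mem_image.mp u'.2
        obtain ⟨v, hv, hv'⟩ := Finset.mem_image.mp v'.2
        refine ⟨⟨u, hu⟩, ⟨v, hv⟩, ?_, ?_⟩
        · rw [← hσ u v, hu', hv']; exact hc
        · dsimp only
          intro h
          apply hw
          have heq : (A.image σ) \ {u'.1, v'.1} = (A \ {u, v}).image σ := by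
            rw [← hu', ← hv']; exact key u v
          rw [heq]
          exact ((ih _ (hsub u v hu)).1).mp h

/-- A winning move `{u,v}` with `u ∈ S` can be replaced by a move `{u, v'}` of the
same color with `v' ∈ S` or `{u,v'} ∈ E^R(S)`. -/
lemma key_replace {V : Type} [Fintype V] [DecidableEq V]
    (G : ECGraph V) (S : Set V) (hS : IsVertexCover G S)
    (ρ : (S → Option EColor) → V)
    (hρ : ∀ x : S → Option EColor, (∃ v : V, v ∉ S ∧ profile G S v = x) →
      ρ x ∉ S ∧ profile G S (ρ x) = x)
    (u v : V) (hu : u ∈ S) (huv : G.col u v ≠ none)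
    (P : Finset V → Prop)
    (hP : ∀ σ : Equiv.Perm V, (∀ x y, G.col (σ x) (σ y) = G.col x y) →
      ∀ A : Finset V, (P A ↔ P (A.image σ)))
    (hw : ¬ P (Finset.univ \ {u, v})) :
    ∃ v' : V, G.col u v' = G.col u v ∧
      ((u ∈ S ∧ v' ∈ S) ∨ InER G S ρ u v' ∨ InER G S ρ v' u) ∧
      ¬ P (Finset.univ \ {u, v'}) := by
  by_cases hvS : v ∈ S
  · exact ⟨v, rfl, Or.inl ⟨hu, hvS⟩, hw⟩
  · set v' := ρ (profile G S v) with hv'def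
    obtain ⟨hv'S, hprof⟩ := hρ (profile G S v) ⟨v, hvS, rfl⟩
    have hall : ∀ x : V, G.col v' x = G.col v x := by
      intro x
      by_cases hx : x ∈ S
      · exact congrFun hprof ⟨x, hx⟩
      · have h1 : G.col v' x = none := by
          by_contra h
          rcases hS v' x h with h | h
          · exact hv'S h
          · exact hx h
        have h2 : G.col v x = none := by
          by_contra h
          rcases hS v x h with h | h
          · exact hvS h
          · exact hx h
        rw [h1, h2]
    have hcol : G.col u v' = G.col u v := by
      rw [G.symm u v', hall u, G.symm v u]
    have h1 : ∀ x y : V, G.col (Equiv.swap v v' x) y = G.col x y := by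
      intro x y
      rcases eq_or_ne x v with rfl | hxv
      · rw [Equiv.swap_apply_left, hall]
      · rcases eq_or_ne x v' with rfl | hxv'
        · rw [Equiv.swap_apply_right, ← hall]
        · rw [Equiv.swap_apply_of_ne_of_ne hxv hxv']
    have hσ : ∀ x y : V, G.col (Equiv.swap v v' x) (Equiv.swap v v' y) = G.col x y := by
      intro x y
      rw [h1, G.symm, h1, G.symm]
    have hu_ne_v : u ≠ v := fun h => hvS (h ▸ hu)
    have hu_ne_v' : u ≠ v' := by rintro rfl; exact hv'S hu
    have himg : (Finset.univ \ {u, v} : Finset V).image (Equiv.swap v v')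
        = Finset.univ \ {u, v'} := by
      rw [Finset.image_sdiff _ _ (Equiv.swap v v').injective, Finset.image_insert,
        Finset.image_singleton, Equiv.swap_apply_of_ne_of_ne hu_ne_v hu_ne_v',
        Equiv.swap_apply_left]
      congr 1
      ext x
      simp only [Finset.mem_image, Finset.mem_univ, true_and, iff_true]
      exact ⟨Equiv.swap v v' x, Equiv.swap_apply_self v v' x⟩
    refine ⟨v', hcol, Or.inr (Or.inl ⟨?_, hu, hv'S, ?_⟩), ?_⟩
    · rw [hcol]; exact huv
    · rw [hprof]
    · intro h
      apply hw
      refine (hP _ hσ _).mpr ?_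
      rw [himg]
      exact h
/-- Both players may restrict their moves to edges inside `S` or edges of the
representative edge set `E^R(S)`: the recursions (3) and (4).
Here `ρ` is any choice of a representative in each nonempty equivalence class
`V_S^{(x)}` (the vertices outside `S` with profile `x`). -/
theorem restrict_to_representatives {V : Type} [Fintype V] [DecidableEq V]
    (G : ECGraph V) (S : Set V) (hS : IsVertexCover G S)
    (ρ : (S → Option EColor) → V)
    (hρ : ∀ x : S → Option EColor, (∃ v : V, v ∉ S ∧ profile G S v = x) →
      ρ x ∉ S ∧ profile G S (ρ x) = x) :
    (fB G Finset.univ ↔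
      ∃ u v : V,
        (G.col u v = some EColor.gray ∨ G.col u v = some EColor.black) ∧
        ((u ∈ S ∧ v ∈ S) ∨ InER G S ρ u v ∨ InER G S ρ v u) ∧
        ¬ fW G (Finset.univ \ {u, v})) ∧
    (fW G Finset.univ ↔
      ∃ u v : V,
        (G.col u v = some EColor.gray ∨ G.col u v = some EColor.white) ∧
        ((u ∈ S ∧ v ∈ S) ∨ InER G S ρ u v ∨ InER G S ρ v u) ∧
        ¬ fB G (Finset.univ \ {u, v})) := by

  constructor
  · constructor
    · intro hfB
      unfold fB at hfB
      obtain ⟨u, v, hc, hw⟩ := hfB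
      have huv : G.col u.1 v.1 ≠ none := by
        rcases hc with h | h <;> simp [h]
      rcases hS u.1 v.1 huv with hu | hv
      · obtain ⟨v', hcol, hcond, hw'⟩ := key_replace G S hS ρ hρ u.1 v.1 hu huv (fW G)
          (fun σ hσ A => (fBW_image G σ hσ A).2) hw
        exact ⟨u.1, v', by rw [hcol]; exact hc, hcond, hw'⟩
      · have hvu : G.col v.1 u.1 ≠ none := by rw [G.symm v.1 u.1]; exact huv
        have hw2 : ¬ fW G (Finset.univ \ {v.1, u.1}) := by
          rw [Finset.pair_comm]; exact hw
        obtain ⟨u', hcol, hcond, hw'⟩ := key_replace G S hS ρ hρ v.1 u.1 hv hvu (fW G)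
          (fun σ hσ A => (fBW_image G σ hσ A).2) hw2
        have hcol' : G.col u' v.1 = G.col u.1 v.1 := by
          rw [G.symm u' v.1, hcol, G.symm]
        refine ⟨u', v.1, by rw [hcol']; exact hc, ?_, ?_⟩
        · tauto
        · rw [Finset.pair_comm]; exact hw'
    · rintro ⟨u, v, hc, -, hw⟩
      unfold fB
      exact ⟨⟨u, Finset.mem_univ u⟩, ⟨v, Finset.mem_univ v⟩, hc, hw⟩
  · constructor
    · intro hfW
      unfold fW at hfW
      obtain ⟨u, v, hc, hw⟩ := hfW
      have huv : G.col u.1 v.1 ≠ none := by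
        rcases hc with h | h <;> simp [h]
      rcases hS u.1 v.1 huv with hu | hv
      · obtain ⟨v', hcol, hcond, hw'⟩ := key_replace G S hS ρ hρ u.1 v.1 hu huv (fB G)
          (fun σ hσ A => (fBW_image G σ hσ A).1) hw
        exact ⟨u.1, v', by rw [hcol]; exact hc, hcond, hw'⟩
      · have hvu : G.col v.1 u.1 ≠ none := by rw [G.symm v.1 u.1]; exact huv
        have hw2 : ¬ fB G (Finset.univ \ {v.1, u.1}) := by
          rw [Finset.pair_comm]; exact hw
        obtain ⟨u', hcol, hcond, hw'⟩ := key_replace G S hS ρ hρ v.1 u.1 hv hvu (fB G)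
          (fun σ hσ A => (fBW_image G σ hσ A).1) hw2
        have hcol' : G.col u' v.1 = G.col u.1 v.1 := by
          rw [G.symm u' v.1, hcol, G.symm]
        refine ⟨u', v.1, by rw [hcol']; exact hc, ?_, ?_⟩
        · tauto
        · rw [Finset.pair_comm]; exact hw'
    · rintro ⟨u, v, hc, -, hw⟩
      unfold fW
      exact ⟨⟨u, Finset.mem_univ u⟩, ⟨v, Finset.mem_univ v⟩, hc, hw⟩
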